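/- Define E*_{n,k}(α,β,q) by E_{n,k}(α,β,q) = q^(kβ + k(k-1)/2) · E*_{n,k}(α,β,q), where E_{n,k} satisfies E_{0,0}=1 and E_{n,k} = q^(β+k-1)[n-k+α]E_{n-1,k-1} + [k+β]E_{n-1,k}. Then E*_{n,k} satisfies E*_{n,k} = [n-k+α]·E*_{n-1,k-1} + [k+β]·E*_{n-1,k}, and consequently the symmetry E*_{n,k}(α,β,q) = E*_{n,n-k}(β,α,q) holds for all 0 ≤ k ≤ n. -/

import Mathlib

open Finset

noncomputable section

abbrev K : Type := RatFunc ℚ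

def qq : K := RatFunc.X

def qint (m : ℕ) : K := ∑ i ∈ Finset.range m, qq ^ i

def qfact (m : ℕ) : K := ∏ i ∈ Finset.range m, qint (i + 1)

def qbinom (a b : ℕ) : K := qfact a / (qfact b * qfact (a - b))

def E (α β : ℕ) : ℕ → ℕ → K
  | 0, k => if k = 0 then 1 else 0
  | n + 1, 0 => qint β * E α β n 0
  | n + 1, k + 1 =>
      qq ^ (β + k) * qint (n - k + α) * E α β n k + qint (k + 1 + β) * E α β n (k + 1)

def poch (N : ℕ) : PowerSeries K :=
  ∏ i ∈ Finset.range N, (1 - PowerSeries.C (qq ^ i) * PowerSeries.X)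

def Estar (α β n k : ℕ) : K := E α β n k / qq ^ (k * β + k * (k - 1) / 2)

/-
The exponent k β + k(k-1)/2 grows by exactly β + k from k to k + 1, so dividing the recurrence
for E by it removes the power of q and leaves a recurrence for E* whose two weights [n-k+α] and
[k+β] are exchanged by (α, β, k) ↦ (β, α, n-k). The symmetry follows by induction on i and j in
the form E*_{i+j,i}(α,β) = E*_{i+j,j}(β,α), which avoids truncated subtraction.
-/

lemma E_eq_zero_of_lt (α β : ℕ) {n k : ℕ} (h : n < k) : E α β n k = 0 := by
  induction n generalizing k with
  | zero =>
    obtain ⟨j, rfl⟩ := Nat.exists_eq_add_one_of_ne_zero (by omega : k ≠ 0)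
    simp [E]
  | succ m ih =>
    obtain ⟨j, rfl⟩ := Nat.exists_eq_add_one_of_ne_zero (by omega : k ≠ 0)
    simp [E, ih (by omega : m < j), ih (by omega : m < j + 1)]

lemma Estar_eq_zero_of_lt (α β : ℕ) {n k : ℕ} (h : n < k) : Estar α β n k = 0 := by
  rw [Estar, E_eq_zero_of_lt α β h, zero_div]

lemma Estar_zero_zero (α β : ℕ) : Estar α β 0 0 = 1 := by
  simp [Estar, E]

lemma E_eq_pow_mul_Estar (α β n k : ℕ) :
    E α β n k = qq ^ (k * β + k * (k - 1) / 2) * Estar α β n k := by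
  rw [Estar, mul_div_cancel₀ _ (pow_ne_zero _ RatFunc.X_ne_zero)]

lemma Estar_succ_zero (α β n : ℕ) : Estar α β (n + 1) 0 = qint β * Estar α β n 0 := by
  simp [Estar, E]

lemma Estar_succ_succ (α β n k : ℕ) :
    Estar α β (n + 1) (k + 1) =
      qint (n - k + α) * Estar α β n k + qint (k + 1 + β) * Estar α β n (k + 1) := by
  have hexp : (k + 1) * β + (k + 1) * (k + 1 - 1) / 2 = (β + k) + (k * β + k * (k - 1) / 2) := by
    rw [Nat.triangle_succ]
    ring
  rw [Estar, E, E_eq_pow_mul_Estar α β n k, E_eq_pow_mul_Estar α β n (k + 1), hexp, pow_add]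
  have hq : qq ≠ 0 := RatFunc.X_ne_zero
  field_simp
  ring

lemma Estar_zero_eq_Estar_self (α β n : ℕ) : Estar α β n 0 = Estar β α n n := by
  induction n with
  | zero => rw [Estar_zero_zero, Estar_zero_zero]
  | succ m ih =>
    rw [Estar_succ_zero, Estar_succ_succ, ih, Nat.sub_self, zero_add,
      Estar_eq_zero_of_lt β α m.lt_succ_self, mul_zero, add_zero]

lemma Estar_add_left_eq_Estar_add_right (α β i j : ℕ) :
    Estar α β (i + j) i = Estar β α (i + j) j := by
  induction i generalizing j with
  | zero => rw [zero_add, Estar_zero_eq_Estar_self]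
  | succ a ihi =>
    induction j with
    | zero => rw [add_zero, Estar_zero_eq_Estar_self β α]
    | succ b ihj =>
      have h₁ : Estar α β (a + b + 1) a = Estar β α (a + b + 1) (b + 1) := ihi (b + 1)
      have h₂ : Estar α β (a + b + 1) (a + 1) = Estar β α (a + b + 1) b := by
        simpa only [Nat.add_right_comm a 1 b] using ihj
      rw [show a + 1 + (b + 1) = a + b + 1 + 1 by ring, Estar_succ_succ α β _ a,
        Estar_succ_succ β α _ b, h₁, h₂,
        show a + b + 1 - a + α = b + 1 + α by omega, show a + b + 1 - b + β = a + 1 + β by omega]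
      ring

theorem Estar_recurrence_and_symmetry_general (α β : ℕ) :
    (∀ n k : ℕ, 1 ≤ n → k ≤ n →
      Estar α β n k =
        qint (n - k + α) * (if k = 0 then 0 else Estar α β (n - 1) (k - 1)) +
        qint (k + β) * Estar α β (n - 1) k) ∧
    (∀ n k : ℕ, k ≤ n → Estar α β n k = Estar β α n (n - k)) := by
  refine ⟨fun n k hn _ => ?_, fun n k hk => ?_⟩
  · obtain ⟨m, rfl⟩ := Nat.exists_eq_add_one_of_ne_zero (by omega : n ≠ 0)
    cases k with
    | zero => simp [Estar_succ_zero]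
    | succ j => simp [Estar_succ_succ, Nat.add_sub_add_right]
  · obtain ⟨j, rfl⟩ := Nat.exists_eq_add_of_le hk
    rw [Nat.add_sub_cancel_left, Estar_add_left_eq_Estar_add_right]

theorem Estar_recurrence_and_symmetry (α β : ℕ) (hα : 1 ≤ α) (hβ : 1 ≤ β) :
    (∀ n k : ℕ, 1 ≤ n → k ≤ n →
      Estar α β n k =
        qint (n - k + α) * (if k = 0 then 0 else Estar α β (n - 1) (k - 1)) +
        qint (k + β) * Estar α β (n - 1) k) ∧
    (∀ n k : ℕ, k ≤ n → Estar α β n k = Estar β α n (n - k)) :=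
  Estar_recurrence_and_symmetry_general α β

end
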